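/- Let n ≥ 1, let A : ℝⁿ → ℝ^{n+1} be a C^∞ map with components a¹,…,a^{n+1} satisfying det[A(u) | dA(u)] = κ for all u, where κ is a nonzero constant, let Q ∈ C^∞(ℝⁿ), and define F : ℝⁿ × ℝ^{n+1} → ℝ by F(u,x) = Σ_{i=1}^{n+1} aⁱ(u)·xᵢ + Q(u). Define Φ : ℝ × ℝⁿ × ℝⁿ → ℝⁿ × ℝ^{n+1} by Φ(t,r,s) = (r¹,…,rⁿ, c¹(t,r,s),…,c^{n+1}(t,r,s)), where cⁱ(t,r,s) = (−1)^{i+1}·κ⁻¹·(t − Q(r))·dA^{(i)}(r) + eⁱ(t,r,s), with e¹ = s¹·a²(r), e^{n+1} = −sⁿ·aⁿ(r), and eⁱ = −s^{i−1}·a^{i−1}(r) + sⁱ·a^{i+1}(r) for 2 ≤ i ≤ n, and where dA^{(i)}(r) is the determinant of the n×n matrix obtained from the Jacobian dA(r) by deleting its i-th row. Then F(Φ(t,r,s)) = t for all (t,r,s) ∈ ℝ × ℝⁿ × ℝⁿ; in particular, for each t, Φ(t,·,·) maps ℝⁿ × ℝⁿ into the level set { (u,x) : F(u,x) = t }. 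-/

import Mathlib

/-!
Along `Φ` the linear part of `F` is `⟨A(r), c⟩`. Pairing `A(r)` with the signed minors
`(-1)^k dA^{(k)}(r)` is the cofactor expansion of `det[A | dA](r) = κ` along its first
column, so the first part of `c` contributes `t - Q(r)`; the second part contributes
`∑ sᵢ (aⁱ aⁱ⁺¹ - aⁱ⁺¹ aⁱ) = 0`.
-/

open Matrix

noncomputable def pd1 {ι : Type*} [Fintype ι] [DecidableEq ι]
    (F : (ι → ℝ) → ℝ) (i : ι) (x : ι → ℝ) : ℝ :=
  fderiv ℝ F x (Pi.single i 1)

noncomputable def gradv {ι : Type*} [Fintype ι] [DecidableEq ι]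
    (F : (ι → ℝ) → ℝ) (x : ι → ℝ) : ι → ℝ :=
  fun i => pd1 F i x

noncomputable def hessM {ι : Type*} [Fintype ι] [DecidableEq ι]
    (F : (ι → ℝ) → ℝ) (x : ι → ℝ) : Matrix ι ι ℝ :=
  Matrix.of fun i j => pd1 (pd1 F j) i x

noncomputable def Hdet {ι : Type*} [Fintype ι] [DecidableEq ι]
    (F : (ι → ℝ) → ℝ) (x : ι → ℝ) : ℝ :=
  (hessM F x).det

noncomputable def Nvec {ι : Type*} [Fintype ι] [DecidableEq ι]
    (F : (ι → ℝ) → ℝ) (x : ι → ℝ) : ι → ℝ :=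
  (hessM F x).adjugate *ᵥ gradv F x

noncomputable def Uval {ι : Type*} [Fintype ι] [DecidableEq ι]
    (F : (ι → ℝ) → ℝ) (x : ι → ℝ) : ℝ :=
  gradv F x ⬝ᵥ Nvec F x

/-- The Jacobian matrix of a map `A : ℝ^m → ℝ^k`. -/
noncomputable def Jac {m k : ℕ} (A : (Fin m → ℝ) → (Fin k → ℝ)) (u : Fin m → ℝ) :
    Matrix (Fin k) (Fin m) ℝ :=
  Matrix.of fun i j => fderiv ℝ (fun v => A v i) u (Pi.single j 1)

/-- `dA^{(i)}`: the determinant of the `m×m` matrix obtained from the Jacobian of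
`A : ℝ^m → ℝ^{m+1}` by deleting its `i`-th row. -/
noncomputable def minorDel {m : ℕ} (A : (Fin m → ℝ) → (Fin (m+1) → ℝ))
    (i : Fin (m+1)) (u : Fin m → ℝ) : ℝ :=
  ((Jac A u).submatrix i.succAbove id).det

/-- `det[A | dA]`: the determinant of the `(m+1)×(m+1)` matrix whose first column is
`A(u)` and whose remaining columns are those of the Jacobian of `A`. -/
noncomputable def AdA {m : ℕ} (A : (Fin m → ℝ) → (Fin (m+1) → ℝ)) (u : Fin m → ℝ) : ℝ :=
  (Matrix.of fun i j =>
    (Fin.cons (A u) (fun k i' => Jac A u i' k) : Fin (m+1) → (Fin (m+1) → ℝ)) j i).det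

noncomputable def signedMinors {m : ℕ} (A : (Fin m → ℝ) → (Fin (m+1) → ℝ)) (u : Fin m → ℝ) :
    Fin (m+1) → ℝ :=
  fun k => (-1) ^ (k : ℕ) * minorDel A k u

theorem dotProduct_signedMinors {m : ℕ} (A : (Fin m → ℝ) → (Fin (m+1) → ℝ)) (u : Fin m → ℝ) :
    A u ⬝ᵥ signedMinors A u = AdA A u := by
  rw [AdA, det_succ_column_zero]
  refine Finset.sum_congr rfl fun k _ => ?_
  have hminor : (of fun i j =>
      (Fin.cons (A u) (fun l i' => Jac A u i' l) : Fin (m+1) → Fin (m+1) → ℝ) j i).submatrix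
        k.succAbove Fin.succ = (Jac A u).submatrix k.succAbove id := by
    ext i l
    simp
  simp only [signedMinors, minorDel, of_apply, Fin.cons_zero, hminor]
  ring

section Telescope

variable {R : Type*} [CommRing R] {n : ℕ}

def telescope (s : Fin n → R) (a : Fin (n+1) → R) : Fin (n+1) → R :=
  fun k => Fin.lastCases (0 : R) (fun i => s i * a i.succ) k
    - Fin.cases (0 : R) (fun i => s i * a i.castSucc) k

theorem telescope_apply (s : Fin n → R) (a : Fin (n+1) → R) (k : ℕ) (hk : k < n + 1) :
    telescope s a ⟨k, hk⟩ =
      (if h : k < n then s ⟨k, h⟩ * a ⟨k + 1, by omega⟩ else 0)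
        - (if h : 0 < k then s ⟨k - 1, by omega⟩ * a ⟨k - 1, by omega⟩ else 0) := by
  unfold telescope
  congr 1
  · split_ifs with h
    · exact Fin.lastCases_castSucc (i := ⟨k, h⟩)
    · obtain rfl : k = n := by omega
      exact Fin.lastCases_last
  · split_ifs with h
    · obtain ⟨j, rfl⟩ : ∃ j, k = j + 1 := ⟨k - 1, by omega⟩
      exact Fin.cases_succ' _
    · obtain rfl : k = 0 := by omega
      exact Fin.cases_zero

theorem dotProduct_telescope_self (s : Fin n → R) (a : Fin (n+1) → R) :
    a ⬝ᵥ telescope s a = 0 := by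
  simp only [dotProduct, telescope, mul_sub, Finset.sum_sub_distrib]
  rw [Fin.sum_univ_castSucc, Fin.sum_univ_succ]
  simp only [Fin.lastCases_castSucc, Fin.lastCases_last, Fin.cases_succ, Fin.cases_zero,
    mul_zero, add_zero, zero_add]
  exact sub_eq_zero.mpr (Finset.sum_congr rfl fun i _ => by ring)

end Telescope

-- Indices are 0-based: the paper's `(−1)^{i+1} dA^{(i)}`, `s^i`, `a^i` are
-- `(−1)^k · minorDel A k`, `s k`, `A r k` with `k = i − 1`.
/-- explicit parameterization of the level sets of
`F(u,x) = ⟨A(u),x⟩ + Q(u)` when `det[A | dA] ≡ κ ≠ 0`: the map `Φ(t,r,s)` with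
`u`-part `r` and `x`-part `c(t,r,s)` given by the signed-minor and telescoping terms
satisfies `F(Φ(t,r,s)) = t`, so for each `t` it maps into the level set `{F = t}`.
(Indices here are 0-based: the paper's 1-based `(−1)^{i+1} dA^{(i)}`, `s^i`, `a^i`
correspond to `(−1)^k · minorDel A k`, `s (k)`, `A r k` with `k = i − 1`.) -/
theorem stmt19 (n : ℕ)
    (A : (Fin n → ℝ) → (Fin (n+1) → ℝ))
    (κ : ℝ) (hκ : κ ≠ 0) (hAκ : ∀ u, AdA A u = κ)
    (Q : (Fin n → ℝ) → ℝ)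
    (F : ((Fin n ⊕ Fin (n+1)) → ℝ) → ℝ)
    (hF : ∀ z, F z = (∑ i : Fin (n+1), A (fun j => z (Sum.inl j)) i * z (Sum.inr i))
      + Q (fun j => z (Sum.inl j))) :
    ∀ (t : ℝ) (r s : Fin n → ℝ),
      F (Sum.elim r (fun k : Fin (n+1) =>
        (-1 : ℝ) ^ (k : ℕ) * κ⁻¹ * (t - Q r) * minorDel A k r
          + ((if hk : (k : ℕ) < n
              then s ⟨(k : ℕ), hk⟩ * A r ⟨(k : ℕ) + 1, by omega⟩
              else 0)
            - (if hk : 0 < (k : ℕ)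
              then s ⟨(k : ℕ) - 1, by have := k.isLt; omega⟩
                * A r ⟨(k : ℕ) - 1, by have := k.isLt; omega⟩
              else 0)))) = t := by
  intro t r s
  rw [hF]
  calc _ = A r ⬝ᵥ ((κ⁻¹ * (t - Q r)) • signedMinors A r + telescope s (A r)) + Q r := by
        congr 1
        refine Finset.sum_congr rfl fun ⟨k, hk⟩ _ => ?_
        simp only [Sum.elim_inl, Sum.elim_inr, Pi.add_apply, Pi.smul_apply, smul_eq_mul,
          signedMinors, telescope_apply]
        ring
    _ = t := by
        rw [dotProduct_add, dotProduct_smul, dotProduct_signedMinors, hAκ,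
          dotProduct_telescope_self, smul_eq_mul]
        field_simp
        ring
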